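/- arXiv:2012.13132 — 8 statements merged into one kernel-verified Lean document; each statement's English description precedes it below -/
import Mathlib

section
/- For any image g : P → ℝ≥0 on a pixel set P in an abelian group M, any finite structuring element B with 0 ∈ B, and any threshold t ≥ 0, erosion commutes with thresholding: ε_B(τ_t(g)) = τ_t(ε_B(g)), where τ_t(g)(x) = 0 if g(x) ≤ t and 1 otherwise. -/
open scoped NNReal

variable {M : Type*} [AddCommGroup M]

/-- Erosion of an image `g` on pixel set `P` via structuring element `B`. -/
noncomputable def mErosion (P : Set M) (B : Finset M) (g : M → ℝ≥0) : M → ℝ≥0 :=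
  fun x => sInf {y | ∃ b ∈ B, x + b ∈ P ∧ g (x + b) = y}

/-- Dilation of an image `g` on pixel set `P` via structuring element `B`. -/
noncomputable def mDilation (P : Set M) (B : Finset M) (g : M → ℝ≥0) : M → ℝ≥0 :=
  fun x => sSup {y | ∃ b ∈ B, x - b ∈ P ∧ g (x - b) = y}

/-- Morphological opening. -/
noncomputable def mOpening (P : Set M) (B : Finset M) (g : M → ℝ≥0) : M → ℝ≥0 :=
  mDilation P B (mErosion P B g)

/-- Morphological closing. -/
noncomputable def mClosing (P : Set M) (B : Finset M) (g : M → ℝ≥0) : M → ℝ≥0 :=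
  mErosion P B (mDilation P B g)

/-- Thresholding operator `τ_t`. -/
noncomputable def mThreshold (t : ℝ≥0) (g : M → ℝ≥0) : M → ℝ≥0 :=
  fun x => if g x ≤ t then 0 else 1

/-- Positive shift inclusion condition `B₁ ⊆_{S,P,+} B₂` (without the subset requirement). -/
def shiftPos (P : Set M) (B₁ B₂ : Finset M) : Prop :=
  ∀ x ∈ P, ∀ b₂ ∈ B₂, x + b₂ ∈ P →
    ∃ b₁ ∈ B₁, x + b₁ ∈ P ∧ ∀ b ∈ B₁, b + (b₂ - b₁) ∈ B₂

/-- Negative shift inclusion condition `B₁ ⊆_{S,P,−} B₂` (without the subset requirement). -/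
def shiftNeg (P : Set M) (B₁ B₂ : Finset M) : Prop :=
  ∀ x ∈ P, ∀ b₂ ∈ B₂, x - b₂ ∈ P →
    ∃ b₁ ∈ B₁, x - b₁ ∈ P ∧ ∀ b ∈ B₁, b + (b₂ - b₁) ∈ B₂

/-! Thresholding is a monotone map of grey levels, and the minimum of a finite nonempty set of
grey levels commutes with every monotone map; `0 ∈ B` makes the window of each `x ∈ P` nonempty. -/

theorem mErosion_eq_sInf_image (P : Set M) (B : Finset M) (g : M → ℝ≥0) (x : M) :
    mErosion P B g x = sInf ((fun b => g (x + b)) '' {b | b ∈ B ∧ x + b ∈ P}) := by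
  simp only [mErosion, Set.image, Set.mem_ofPred_eq, and_assoc]

theorem mErosion_comp_of_monotone (P : Set M) (B : Finset M) {f : ℝ≥0 → ℝ≥0} (hf : Monotone f)
    (g : M → ℝ≥0) {x : M} (hx : ∃ b ∈ B, x + b ∈ P) :
    mErosion P B (f ∘ g) x = f (mErosion P B g x) := by
  have hfin : {b | b ∈ B ∧ x + b ∈ P}.Finite := B.finite_toSet.subset fun _ hb => hb.1
  have hne : {b | b ∈ B ∧ x + b ∈ P}.Nonempty := hx
  rw [mErosion_eq_sInf_image, mErosion_eq_sInf_image,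
    Set.Finite.map_sInf_of_monotone hf (hne.image _) (hfin.image _), Set.image_image]
  rfl

theorem monotone_threshold (t : ℝ≥0) :
    Monotone fun y : ℝ≥0 => if y ≤ t then (0 : ℝ≥0) else 1 := by
  intro a b hab
  dsimp only
  split_ifs with ha hb hb
  · exact le_rfl
  · exact zero_le_one
  · exact absurd (hab.trans hb) ha
  · exact le_rfl

/-- Erosion commutes with thresholding. -/
theorem erosion_comm_threshold (P : Set M) (B : Finset M) (h0 : (0 : M) ∈ B)
    (g : M → ℝ≥0) (t : ℝ≥0) :
    ∀ x ∈ P, mErosion P B (mThreshold t g) x = mThreshold t (mErosion P B g) x :=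
  fun x hx => mErosion_comp_of_monotone P B (monotone_threshold t) g ⟨0, h0, by rwa [add_zero]⟩
end

section
/- Let P and R₁ be rectangles in ℤ^m (products of integer intervals) with 0 ∈ R₁, and let e_i be a standard basis vector. Then R₁ is shift included with respect to P in R₁ ∪ (R₁ + e_i), and also in R₁ ∪ (R₁ − e_i). -/
/-- A rectangle in `ℤ^m`: a product of integer intervals. -/
def IsRect {m : ℕ} (S : Set (Fin m → ℤ)) : Prop :=
  ∃ a b : Fin m → ℤ, (∀ i, a i ≤ b i) ∧ S = {x | ∀ i, a i ≤ x i ∧ x i ≤ b i}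

/-- Shift inclusion `B₁ ⊆_{S,P} B₂` for subsets of `ℤ^m`. -/
def shiftInclS {m : ℕ} (P B₁ B₂ : Set (Fin m → ℤ)) : Prop :=
  B₁ ⊆ B₂ ∧
  (∀ x ∈ P, ∀ b₂ ∈ B₂, x + b₂ ∈ P →
    ∃ b₁ ∈ B₁, x + b₁ ∈ P ∧ ∀ b ∈ B₁, b + (b₂ - b₁) ∈ B₂) ∧
  (∀ x ∈ P, ∀ b₂ ∈ B₂, x - b₂ ∈ P →
    ∃ b₁ ∈ B₁, x - b₁ ∈ P ∧ ∀ b ∈ B₁, b + (b₂ - b₁) ∈ B₂)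

/-!
A rectangle is convex in each coordinate: with `x` and `x ± c` it contains `x ± b` whenever `b`
lies between `0` and `c` coordinatewise. So it suffices to answer each `b₂ ∈ R₁ ∪ (R₁ + ε eᵢ)` by
some `b₁ ∈ R₁` between `0` and `b₂` whose shift `R₁ + (b₂ - b₁)` stays in the union. If `b₂ ∈ R₁`
take `b₁ = b₂`. Otherwise `b₂ = r + ε eᵢ` with `r ∈ R₁`; since `|ε| ≤ 1` and `0 ∈ R₁`, the step
can only leave the rectangle through the face on the far side from `0`, so `b₁ = r` lies between
`0` and `b₂`, and its shift `R₁ + ε eᵢ` is the second part of the union.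
-/

namespace IsRect

variable {m : ℕ} {P : Set (Fin m → ℤ)}

theorem add_mem_of_forall_mem_uIcc (hP : IsRect P) {x b c : Fin m → ℤ} (hx : x ∈ P)
    (hxc : x + c ∈ P) (hb : ∀ j, b j ∈ Set.uIcc 0 (c j)) : x + b ∈ P := by
  obtain ⟨lo, hi, -, rfl⟩ := hP
  intro j
  have hxj : lo j ≤ x j ∧ x j ≤ hi j := hx j
  have hxcj : lo j ≤ x j + c j ∧ x j + c j ≤ hi j := hxc j
  have hbj := Set.mem_uIcc.mp (hb j)
  rw [Pi.add_apply]
  omega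

theorem sub_mem_of_forall_mem_uIcc (hP : IsRect P) {x b c : Fin m → ℤ} (hx : x ∈ P)
    (hxc : x - c ∈ P) (hb : ∀ j, b j ∈ Set.uIcc 0 (c j)) : x - b ∈ P := by
  rw [sub_eq_add_neg] at hxc ⊢
  refine hP.add_mem_of_forall_mem_uIcc hx hxc fun j => ?_
  simpa only [Pi.neg_apply, neg_zero, Set.image_neg_uIcc] using Set.mem_image_of_mem Neg.neg (hb j)

theorem mem_uIcc_zero_of_add_single_notMem {R : Set (Fin m → ℤ)} (hR : IsRect R) (h0 : 0 ∈ R)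
    {r : Fin m → ℤ} (hr : r ∈ R) {i : Fin m} {ε : ℤ} (hε : |ε| ≤ 1)
    (hout : r + Pi.single i ε ∉ R) (j : Fin m) :
    r j ∈ Set.uIcc 0 (r j + (Pi.single i ε : Fin m → ℤ) j) := by
  obtain ⟨a, b, -, rfl⟩ := hR
  have houti : ¬ (a i ≤ r i + ε ∧ r i + ε ≤ b i) := fun hi => hout fun k => by
    rcases eq_or_ne k i with rfl | hk
    · simpa using hi
    · simpa [Pi.single_eq_of_ne hk] using hr k
  rcases eq_or_ne j i with rfl | hj
  · have h0j : a j ≤ 0 ∧ 0 ≤ b j := h0 j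
    have hrj : a j ≤ r j ∧ r j ≤ b j := hr j
    rw [Pi.single_eq_same, Set.mem_uIcc]
    rw [abs_le] at hε
    omega
  · simp [Pi.single_eq_of_ne hj]

end IsRect

theorem shiftInclS_of_forall_mem_uIcc {m : ℕ} {P B₁ B₂ : Set (Fin m → ℤ)} (hP : IsRect P)
    (hB : B₁ ⊆ B₂)
    (h : ∀ b₂ ∈ B₂, ∃ b₁ ∈ B₁, (∀ j, b₁ j ∈ Set.uIcc 0 (b₂ j)) ∧ ∀ b ∈ B₁, b + (b₂ - b₁) ∈ B₂) :
    shiftInclS P B₁ B₂ := by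
  refine ⟨hB, fun x hx b₂ hb₂ hxb => ?_, fun x hx b₂ hb₂ hxb => ?_⟩ <;>
    obtain ⟨b₁, hb₁, hbetween, hshift⟩ := h b₂ hb₂
  · exact ⟨b₁, hb₁, hP.add_mem_of_forall_mem_uIcc hx hxb hbetween, hshift⟩
  · exact ⟨b₁, hb₁, hP.sub_mem_of_forall_mem_uIcc hx hxb hbetween, hshift⟩

theorem shiftInclS_union_image_add_single {m : ℕ} {P R : Set (Fin m → ℤ)} (hP : IsRect P)
    (hR : IsRect R) (h0 : 0 ∈ R) (i : Fin m) {ε : ℤ} (hε : |ε| ≤ 1) :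
    shiftInclS P R (R ∪ (· + Pi.single i ε) '' R) := by
  refine shiftInclS_of_forall_mem_uIcc hP Set.subset_union_left ?_
  have hstay : ∀ b₂ ∈ R, ∃ b₁ ∈ R, (∀ j, b₁ j ∈ Set.uIcc 0 (b₂ j)) ∧
      ∀ b ∈ R, b + (b₂ - b₁) ∈ R ∪ (· + Pi.single i ε) '' R :=
    fun b₂ hb₂ => ⟨b₂, hb₂, fun j => Set.right_mem_uIcc, fun b hb => by simpa using Or.inl hb⟩
  rintro _ (hb₂ | ⟨r, hr, rfl⟩)
  · exact hstay _ hb₂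
  by_cases hin : r + Pi.single i ε ∈ R
  · exact hstay _ hin
  · exact ⟨r, hr, hR.mem_uIcc_zero_of_add_single_notMem h0 hr hε hin,
      fun b hb => Or.inr ⟨b, hb, by rw [add_sub_cancel_left]⟩⟩

/-- One-step shifting lemma for rectangles. -/
theorem rect_shiftIncl_one_step {m : ℕ} (P R₁ : Set (Fin m → ℤ))
    (hP : IsRect P) (hR : IsRect R₁) (h0 : (0 : Fin m → ℤ) ∈ R₁) (i : Fin m) :
    shiftInclS P R₁ (R₁ ∪ (· + Pi.single i 1) '' R₁) ∧
    shiftInclS P R₁ (R₁ ∪ (· - Pi.single i 1) '' R₁) := by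
  have hsub : (· - Pi.single i 1) = (fun x : Fin m → ℤ => x + Pi.single i (-1)) := by
    funext x
    rw [Pi.single_neg, sub_eq_add_neg]
  rw [hsub]
  exact ⟨shiftInclS_union_image_add_single hP hR h0 i (by norm_num),
    shiftInclS_union_image_add_single hP hR h0 i (by norm_num)⟩
end

section
/- Let P ⊆ ℤ^m be a rectangle. If R₁ ⊆ R₂ are rectangles in ℤ^m with 0 ∈ R₁, then R₁ ⊆_{S,P} R₂ (R₁ is shift included in R₂ with respect to P). -/
/-!
Writing the rectangles as order intervals `Icc` in the lattice-ordered group `ℤ^m`, the shift is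
realised by the clamp `b₁ = a ⊔ (b ⊓ b₂)` of `b₂` into `R₁ = [a, b]`. Since `0 ∈ [a, b]`, `b₁` lies
between `0` and `b₂`, so `x ± b₁` lies between `x` and `x ± b₂` and hence in `P`. Moreover
`b₂ - b₁` moves `R₁` only in the direction in which `b₂` overshoots it, so `R₁ + (b₂ - b₁)` stays
inside `[a ⊓ b₂, b ⊔ b₂] ⊆ R₂`.
-/

open Set
open scoped Interval

lemma sup_inf_mem_uIcc {α : Type*} [Lattice α] {a b t z : α} (ha : a ≤ z) (hb : z ≤ b) :
    a ⊔ (b ⊓ t) ∈ [[z, t]] :=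
  ⟨le_sup_of_le_right (inf_le_inf_right t hb),
    sup_le (le_sup_of_le_left ha) (le_sup_of_le_right inf_le_right)⟩

lemma sup_inf_mem_Icc {α : Type*} [Lattice α] {a b t : α} (hab : a ≤ b) :
    a ⊔ (b ⊓ t) ∈ Icc a b :=
  ⟨le_sup_left, sup_le hab inf_le_left⟩

section LatticeOrderedGroup

variable {α : Type*} [AddCommGroup α] [Lattice α] [IsOrderedAddMonoid α] {a b c d t u x y : α}

lemma add_mem_uIcc_add (hu : u ∈ [[0, t]]) : x + u ∈ [[x, x + t]] := by
  have hlo := add_le_add_right hu.1 x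
  have hhi := add_le_add_right hu.2 x
  rw [add_inf, add_zero] at hlo
  rw [add_sup, add_zero] at hhi
  exact ⟨hlo, hhi⟩

lemma sub_mem_uIcc_sub (hu : u ∈ [[0, t]]) : x - u ∈ [[x, x - t]] := by
  have hlo := sub_le_sub_left hu.2 x
  have hhi := sub_le_sub_left hu.1 x
  rw [sub_sup, sub_zero] at hlo
  rw [sub_inf, sub_zero] at hhi
  exact ⟨hlo, hhi⟩

lemma add_sub_sup_inf_mem_Icc (hca : c ≤ a) (hbd : b ≤ d) (ht : t ∈ Icc c d) (hy : y ∈ Icc a b) :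
    y + (t - a ⊔ (b ⊓ t)) ∈ Icc c d := by
  have hb : b + (t - b ⊓ t) = b ⊔ t := by
    rw [← add_sub_assoc, ← inf_add_sup b t, add_sub_cancel_left]
  have ha : a + (t - a ⊔ t) = a ⊓ t := by
    rw [← add_sub_assoc, ← inf_add_sup a t, add_sub_cancel_right]
  constructor
  · calc c ≤ a ⊓ t := le_inf hca ht.1
      _ = a + (t - a ⊔ t) := ha.symm
      _ ≤ y + (t - a ⊔ (b ⊓ t)) := by gcongr; exacts [hy.1, inf_le_right]
  · calc y + (t - a ⊔ (b ⊓ t)) ≤ b + (t - b ⊓ t) := by gcongr; exacts [hy.2, le_sup_right]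
      _ = b ⊔ t := hb
      _ ≤ d := sup_le hbd ht.2

end LatticeOrderedGroup

lemma IsRect.exists_eq_Icc {m : ℕ} {S : Set (Fin m → ℤ)} (hS : IsRect S) :
    ∃ a b, S = Icc a b := by
  obtain ⟨a, b, -, rfl⟩ := hS
  exact ⟨a, b, by ext x; simp only [mem_ofPred_eq, mem_Icc, Pi.le_def, forall_and]⟩

lemma shiftInclS_Icc {m : ℕ} {p q a b c d : Fin m → ℤ} (h0 : (0 : Fin m → ℤ) ∈ Icc a b)
    (hca : c ≤ a) (hbd : b ≤ d) : shiftInclS (Icc p q) (Icc a b) (Icc c d) := by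
  have hclamp_mem (t : Fin m → ℤ) : a ⊔ (b ⊓ t) ∈ Icc a b := sup_inf_mem_Icc (h0.1.trans h0.2)
  have hclamp (t : Fin m → ℤ) : a ⊔ (b ⊓ t) ∈ [[0, t]] := sup_inf_mem_uIcc h0.1 h0.2
  refine ⟨Icc_subset_Icc hca hbd, ?_, ?_⟩
  · intro x hx t ht hxt
    exact ⟨_, hclamp_mem t,
      uIcc_subset_Icc hx hxt (add_mem_uIcc_add (hclamp t)),
      fun y hy => add_sub_sup_inf_mem_Icc hca hbd ht hy⟩
  · intro x hx t ht hxt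
    exact ⟨_, hclamp_mem t,
      uIcc_subset_Icc hx hxt (sub_mem_uIcc_sub (hclamp t)),
      fun y hy => add_sub_sup_inf_mem_Icc hca hbd ht hy⟩

/-- Nested rectangles containing the origin are shift included w.r.t. a rectangular domain. -/
theorem rect_shiftIncl {m : ℕ} (P R₁ R₂ : Set (Fin m → ℤ))
    (hP : IsRect P) (hR1 : IsRect R₁) (hR2 : IsRect R₂)
    (h0 : (0 : Fin m → ℤ) ∈ R₁) (hsub : R₁ ⊆ R₂) :
    shiftInclS P R₁ R₂ := by
  obtain ⟨p, q, rfl⟩ := hP.exists_eq_Icc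
  obtain ⟨a, b, rfl⟩ := hR1.exists_eq_Icc
  obtain ⟨c, d, rfl⟩ := hR2.exists_eq_Icc
  obtain ⟨hca, hbd⟩ := (Icc_subset_Icc_iff (h0.1.trans h0.2)).1 hsub
  exact shiftInclS_Icc h0 hca hbd
end

section
/- Let P ⊆ ℤ^m be a rectangle and let Q_ω = { x ∈ ℤ^m : ‖x‖₁ ≤ ω } be the L¹-ball of radius ω. Then for every nonnegative integer ω, Q_ω ⊆_{S,P} Q_{ω+1}. -/
open Finset

theorem IsRect.mem_of_forall_mem_uIcc {m : ℕ} {P : Set (Fin m → ℤ)} (hP : IsRect P)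
    {x y z : Fin m → ℤ} (hx : x ∈ P) (hy : y ∈ P) (hz : ∀ i, z i ∈ Set.uIcc (x i) (y i)) :
    z ∈ P := by
  obtain ⟨a, b, -, rfl⟩ := hP
  exact fun i => Set.ordConnected_Icc.uIcc_subset (hx i) (hy i) (hz i)

theorem shiftInclS_of_forall_exists_mem_uIcc {m : ℕ} {P B₁ B₂ : Set (Fin m → ℤ)}
    (hP : IsRect P) (hB : B₁ ⊆ B₂)
    (h : ∀ b₂ ∈ B₂, ∃ b₁ ∈ B₁, (∀ i, b₁ i ∈ Set.uIcc 0 (b₂ i)) ∧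
      ∀ b ∈ B₁, b + (b₂ - b₁) ∈ B₂) :
    shiftInclS P B₁ B₂ := by
  refine ⟨hB, fun x hx b₂ hb₂ hxb => ?_, fun x hx b₂ hb₂ hxb => ?_⟩ <;>
    obtain ⟨b₁, hb₁, hmem, hshift⟩ := h b₂ hb₂ <;>
    refine ⟨b₁, hb₁, hP.mem_of_forall_mem_uIcc hx hxb fun i => ?_, hshift⟩ <;>
    have := hmem i <;>
    simp only [Pi.add_apply, Pi.sub_apply, Set.mem_uIcc] at this ⊢ <;>
    omega

section L1

variable {ι : Type*} [Fintype ι]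

theorem sum_abs_add_le {α : Type*} [AddCommGroup α] [LinearOrder α] [IsOrderedAddMonoid α]
    (b d : ι → α) : ∑ i, |(b + d) i| ≤ ∑ i, |b i| + ∑ i, |d i| := by
  rw [← sum_add_distrib]
  exact sum_le_sum fun i _ => abs_add_le (b i) (d i)

theorem abs_eq_abs_add_abs_sub_of_mem_uIcc {α : Type*} [AddCommGroup α] [LinearOrder α]
    [IsOrderedAddMonoid α] {a c : α} (h : c ∈ Set.uIcc 0 a) : |a| = |c| + |a - c| := by
  rcases Set.mem_uIcc.1 h with ⟨h₀, h₁⟩ | ⟨h₀, h₁⟩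
  · rw [abs_of_nonneg (h₀.trans h₁), abs_of_nonneg h₀, abs_of_nonneg (sub_nonneg.2 h₁)]
    abel
  · rw [abs_of_nonpos (h₀.trans h₁), abs_of_nonpos h₁, abs_of_nonpos (sub_nonpos.2 h₀)]
    abel

theorem exists_forall_mem_uIcc_sum_abs_sub_eq_one {b : ι → ℤ} (hb : b ≠ 0) :
    ∃ b' : ι → ℤ, (∀ i, b' i ∈ Set.uIcc 0 (b i)) ∧
      ∑ i, |b' i| = ∑ i, |b i| - 1 ∧ ∑ i, |b i - b' i| = 1 := by
  classical
  obtain ⟨j, hj : b j ≠ 0⟩ := Function.ne_iff.1 hb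
  set d : ι → ℤ := Pi.single j (b j).sign
  have hmem : ∀ i, (b - d) i ∈ Set.uIcc 0 (b i) := by
    intro i
    rcases eq_or_ne i j with rfl | hij
    · rw [Pi.sub_apply, show d i = (b i).sign from Pi.single_eq_same _ _, Set.mem_uIcc]
      rcases hj.lt_or_gt with h | h
      · rw [Int.sign_eq_neg_one_of_neg h]; omega
      · rw [Int.sign_eq_one_of_pos h]; omega
    · simp [d, Pi.single_eq_of_ne hij]
  have hd : ∑ i, |b i - (b - d) i| = 1 := by
    simp [d, Pi.single_apply, apply_ite, Int.abs_sign_of_ne_zero hj]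
  refine ⟨b - d, hmem, ?_, hd⟩
  rw [← hd, eq_sub_iff_add_eq, ← sum_add_distrib]
  exact sum_congr rfl fun i _ => (abs_eq_abs_add_abs_sub_of_mem_uIcc (hmem i)).symm

theorem exists_forall_mem_uIcc_sum_abs_le {b : ι → ℤ} {ω : ℕ}
    (hb : ∑ i, |b i| ≤ (ω : ℤ) + 1) :
    ∃ b' : ι → ℤ, (∀ i, b' i ∈ Set.uIcc 0 (b i)) ∧
      ∑ i, |b' i| ≤ ω ∧ ∑ i, |b i - b' i| ≤ 1 := by
  by_cases hω : ∑ i, |b i| ≤ ω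
  · exact ⟨b, fun _ => Set.right_mem_uIcc, hω, by simp⟩
  · have hb0 : b ≠ 0 := by
      rintro rfl
      simp at hω
    obtain ⟨b', hmem, hsum, hd⟩ := exists_forall_mem_uIcc_sum_abs_sub_eq_one hb0
    exact ⟨b', hmem, by omega, hd.le⟩

end L1

/-- L¹-balls are shift included w.r.t. a rectangular domain. -/
theorem l1ball_shiftIncl {m : ℕ} (P : Set (Fin m → ℤ)) (hP : IsRect P) (ω : ℕ) :
    shiftInclS P {x : Fin m → ℤ | (∑ i, |x i|) ≤ (ω : ℤ)}
      {x : Fin m → ℤ | (∑ i, |x i|) ≤ (ω : ℤ) + 1} := by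
  refine shiftInclS_of_forall_exists_mem_uIcc hP (fun _ => Int.le_add_one) fun b₂ hb₂ => ?_
  obtain ⟨b₁, hmem, hb₁, hd⟩ := exists_forall_mem_uIcc_sum_abs_le hb₂
  exact ⟨b₁, hb₁, hmem, fun b hb => (sum_abs_add_le b (b₂ - b₁)).trans (add_le_add hb hd)⟩
end

section
/- (Decomposition theorem for shift inclusion) Let M be an abelian group and B₁ ⊆ B₂ ⊆ M be structuring elements. Then B₁ ⊆_{S,M} B₂ if and only if there exist finitely many v₁, ..., v_n ∈ M such that B₂ = B₁ ∪ (B₁ + v₁) ∪ ... ∪ (B₁ + v_n). -/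
open scoped NNReal

variable {M : Type*} [AddCommGroup M]

/-- The shift inclusion condition `B₁ ⊆_{S,M} B₂`, without the requirement `B₁ ⊆ B₂`. -/
def ShiftIncl (B₁ B₂ : Finset M) : Prop :=
  ∀ b₂ ∈ B₂, ∃ b₁ ∈ B₁, ∀ b ∈ B₁, b + (b₂ - b₁) ∈ B₂

section ShiftUnion

open scoped Pointwise

variable [DecidableEq M]

def shiftUnion (B V : Finset M) : Finset M :=
  B ∪ V.biUnion (fun v => B.image (· + v))

theorem subset_shiftUnion (B V : Finset M) : B ⊆ shiftUnion B V :=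
  Finset.subset_union_left

theorem add_mem_shiftUnion {B V : Finset M} {b v : M} (hb : b ∈ B) (hv : v ∈ V) :
    b + v ∈ shiftUnion B V :=
  Finset.mem_union_right _ (Finset.mem_biUnion.2 ⟨v, hv, Finset.mem_image_of_mem _ hb⟩)

theorem shiftUnion_subset {B V C : Finset M} (hB : B ⊆ C) (hV : ∀ v ∈ V, ∀ b ∈ B, b + v ∈ C) :
    shiftUnion B V ⊆ C := by
  refine Finset.union_subset hB (Finset.biUnion_subset.2 fun v hv => ?_)
  exact Finset.image_subset_iff.2 fun b hb => hV v hv b hb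

theorem shiftIncl_shiftUnion (B V : Finset M) : ShiftIncl B (shiftUnion B V) := by
  intro x hx
  rcases Finset.mem_union.1 hx with hxB | hxV
  · exact ⟨x, hxB, fun b hb => by simpa only [sub_self, add_zero] using subset_shiftUnion B V hb⟩
  · obtain ⟨v, hv, hx⟩ := Finset.mem_biUnion.1 hxV
    obtain ⟨b₁, hb₁, rfl⟩ := Finset.mem_image.1 hx
    exact ⟨b₁, hb₁, fun b hb => by simpa only [add_sub_cancel_left] using add_mem_shiftUnion hb hv⟩

theorem eq_shiftUnion_of_shiftIncl {B₁ B₂ : Finset M} (hsub : B₁ ⊆ B₂) (h : ShiftIncl B₁ B₂) :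
    B₂ = shiftUnion B₁ ((B₂ - B₁).filter fun v => ∀ b ∈ B₁, b + v ∈ B₂) := by
  refine (shiftUnion_subset hsub fun v hv => (Finset.mem_filter.1 hv).2).antisymm' fun b₂ hb₂ => ?_
  obtain ⟨b₁, hb₁, hshift⟩ := h b₂ hb₂
  have hv : b₂ - b₁ ∈ (B₂ - B₁).filter fun v => ∀ b ∈ B₁, b + v ∈ B₂ :=
    Finset.mem_filter.2 ⟨Finset.sub_mem_sub hb₂ hb₁, hshift⟩
  simpa only [add_sub_cancel] using add_mem_shiftUnion hb₁ hv

end ShiftUnion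

theorem shiftIncl_decomposition_general [DecidableEq M] (B₁ B₂ : Finset M) (hsub : B₁ ⊆ B₂) :
    (∀ b₂ ∈ B₂, ∃ b₁ ∈ B₁, ∀ b ∈ B₁, b + (b₂ - b₁) ∈ B₂) ↔
      ∃ V : Finset M, B₂ = B₁ ∪ V.biUnion (fun v => B₁.image (· + v)) := by
  refine ⟨fun h => ⟨_, eq_shiftUnion_of_shiftIncl hsub h⟩, ?_⟩
  rintro ⟨V, rfl⟩
  exact shiftIncl_shiftUnion B₁ V

/-- Decomposition theorem for shift inclusion on the whole group. -/
theorem shiftIncl_decomposition [DecidableEq M] (B₁ B₂ : Finset M)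
    (h1 : (0 : M) ∈ B₁) (h2 : (0 : M) ∈ B₂) (hsub : B₁ ⊆ B₂) :
    (∀ b₂ ∈ B₂, ∃ b₁ ∈ B₁, ∀ b ∈ B₁, b + (b₂ - b₁) ∈ B₂) ↔
      ∃ V : Finset M, B₂ = B₁ ∪ V.biUnion (fun v => B₁.image (· + v)) :=
  shiftIncl_decomposition_general B₁ B₂ hsub
end

section
/- If B₁ ⊆_{S,P,−} B₂ (negative shift inclusion), then for every image g : P → ℝ≥0, the zero set of the opening via B₁ is contained in the zero set of the opening via B₂: O_{B₁}(g)⁻¹(0) ⊆ O_{B₂}(g)⁻¹(0). -/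
/-! An opening vanishes at `x` iff the erosion vanishes at every admissible `x - b`. Given `b₂ ∈ B₂`,
the shift inclusion provides `b₁ ∈ B₁` such that `B₁` translated by `b₂ - b₁` lies in `B₂`; hence the
`B₂`-erosion at `x - b₂` minimises over a superset of the values seen by the `B₁`-erosion at `x - b₁`,
which is zero by hypothesis. -/

open scoped NNReal

variable {M : Type*} [AddCommGroup M]

lemma bddAbove_mDilation_set (P : Set M) (B : Finset M) (f : M → ℝ≥0) (x : M) :
    BddAbove {y | ∃ b ∈ B, x - b ∈ P ∧ f (x - b) = y} :=
  ((B.finite_toSet.image fun b => f (x - b)).subset <| by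
    rintro _ ⟨b, hb, -, rfl⟩
    exact ⟨b, hb, rfl⟩).bddAbove

lemma mDilation_eq_zero_iff {P : Set M} {B : Finset M} {f : M → ℝ≥0} {x : M} :
    mDilation P B f x = 0 ↔ ∀ b ∈ B, x - b ∈ P → f (x - b) = 0 := by
  rw [← nonpos_iff_eq_zero, mDilation, csSup_le_iff' (bddAbove_mDilation_set P B f x)]
  simp only [Set.mem_ofPred_eq, nonpos_iff_eq_zero, forall_exists_index, and_imp]
  exact ⟨fun h b hb hxb => h _ b hb hxb rfl, fun h _ b hb hxb hy => hy ▸ h b hb hxb⟩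

lemma mErosion_le_mErosion_add {P : Set M} {B₁ B₂ : Finset M} (g : M → ℝ≥0) {y d : M}
    (hne : ∃ b ∈ B₁, y + d + b ∈ P) (hB : ∀ b ∈ B₁, b + d ∈ B₂) :
    mErosion P B₂ g y ≤ mErosion P B₁ g (y + d) := by
  have hcomm : ∀ b, y + (b + d) = y + d + b := fun b => by abel
  obtain ⟨b₀, hb₀, hyb₀⟩ := hne
  refine csInf_le_csInf' ⟨_, b₀, hb₀, hyb₀, rfl⟩ ?_
  rintro _ ⟨b, hb, hyb, rfl⟩
  exact ⟨b + d, hB b hb, hcomm b ▸ hyb, by rw [hcomm]⟩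

theorem opening_zero_mono_of_shiftNeg_general (P : Set M) (B₁ B₂ : Finset M)
    (h1 : (0 : M) ∈ B₁)
    (hS : shiftNeg P B₁ B₂) :
    ∀ (g : M → ℝ≥0), ∀ x ∈ P, mOpening P B₁ g x = 0 → mOpening P B₂ g x = 0 := by
  intro g x hx h0
  rw [mOpening, mDilation_eq_zero_iff] at h0 ⊢
  intro b₂ hb₂ hxb₂
  obtain ⟨b₁, hb₁, hxb₁, hshift⟩ := hS x hx b₂ hb₂ hxb₂
  have hshifted : x - b₂ + (b₂ - b₁) = x - b₁ := by abel
  refine nonpos_iff_eq_zero.mp ?_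
  calc mErosion P B₂ g (x - b₂)
      ≤ mErosion P B₁ g (x - b₂ + (b₂ - b₁)) :=
        mErosion_le_mErosion_add g ⟨0, h1, by rwa [add_zero, hshifted]⟩ hshift
    _ = 0 := hshifted ▸ h0 b₁ hb₁ hxb₁

/-- Negative shift inclusion implies the zero sets of openings are nested. -/
theorem opening_zero_mono_of_shiftNeg (P : Set M) (B₁ B₂ : Finset M)
    (h1 : (0 : M) ∈ B₁) (h2 : (0 : M) ∈ B₂) (hsub : B₁ ⊆ B₂)
    (hS : shiftNeg P B₁ B₂) :
    ∀ (g : M → ℝ≥0), ∀ x ∈ P, mOpening P B₁ g x = 0 → mOpening P B₂ g x = 0 :=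
  opening_zero_mono_of_shiftNeg_general P B₁ B₂ h1 hS
end

section
/- (Order-preserving, strong form) If B₁ ⊆_{S,P,−} B₂, then O_{B₂}(g) ≤ O_{B₁}(g) pointwise for every image g : P → ℝ≥0; and if B₁ ⊆_{S,P,+} B₂, then C_{B₁}(g) ≤ C_{B₂}(g) pointwise for every image g. -/
open scoped NNReal

variable {M : Type*} [AddCommGroup M]

/-!
A shift inclusion hands each `b₂ ∈ B₂` a partner `b₁ ∈ B₁` such that `B₁` translated by
`c = b₂ - b₁` lies inside `B₂`. An erosion by `B₂` at `y` takes its minimum over a superset of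
what the erosion by `B₁` at `y + c` sees, so it is smaller; dually a dilation by `B₁` at `y` is
at most the dilation by `B₂` at `y + c`. Comparing the outer dilation (for openings) or erosion
(for closings) term by term with these partners gives both inequalities.
-/

section Morphology

variable {P : Set M} {B B₁ B₂ : Finset M} {g : M → ℝ≥0} {b x y c : M} {a : ℝ≥0}

lemma mErosion_le (hb : b ∈ B) (hx : x + b ∈ P) : mErosion P B g x ≤ g (x + b) :=
  csInf_le (OrderBot.bddBelow _) ⟨b, hb, hx, rfl⟩

lemma le_mErosion (hne : ∃ b ∈ B, x + b ∈ P) (h : ∀ b ∈ B, x + b ∈ P → a ≤ g (x + b)) :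
    a ≤ mErosion P B g x := by
  obtain ⟨b, hb, hx⟩ := hne
  refine le_csInf ⟨_, b, hb, hx, rfl⟩ ?_
  rintro _ ⟨b', hb', hx', rfl⟩
  exact h b' hb' hx'

lemma le_mDilation (hb : b ∈ B) (hx : x - b ∈ P) : g (x - b) ≤ mDilation P B g x := by
  refine le_csSup ?_ ⟨b, hb, hx, rfl⟩
  refine ((B.finite_toSet.image fun b => g (x - b)).subset ?_).bddAbove
  rintro _ ⟨b', hb', -, rfl⟩
  exact ⟨b', hb', rfl⟩

lemma mDilation_le (h : ∀ b ∈ B, x - b ∈ P → g (x - b) ≤ a) : mDilation P B g x ≤ a := by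
  refine csSup_le' ?_
  rintro _ ⟨b, hb, hx, rfl⟩
  exact h b hb hx

lemma mErosion_le_mErosion_add_s15 (hc : ∀ b ∈ B₁, b + c ∈ B₂) (h0 : 0 ∈ B₁) (hy : y + c ∈ P) :
    mErosion P B₂ g y ≤ mErosion P B₁ g (y + c) := by
  refine le_mErosion ⟨0, h0, by rwa [add_zero]⟩ fun b hb hyb => ?_
  have hshift : y + (b + c) = y + c + b := by abel
  rw [← hshift] at hyb ⊢
  exact mErosion_le (hc b hb) hyb

lemma mDilation_le_mDilation_add (hc : ∀ b ∈ B₁, b + c ∈ B₂) :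
    mDilation P B₁ g y ≤ mDilation P B₂ g (y + c) := by
  refine mDilation_le fun b hb hyb => ?_
  have hshift : y + c - (b + c) = y - b := by abel
  rw [← hshift] at hyb ⊢
  exact le_mDilation (hc b hb) hyb

lemma mOpening_le_mOpening_of_shiftNeg (hs : shiftNeg P B₁ B₂) (h0 : 0 ∈ B₁) (hx : x ∈ P) :
    mOpening P B₂ g x ≤ mOpening P B₁ g x := by
  refine mDilation_le fun b₂ hb₂ hxb₂ => ?_
  obtain ⟨b₁, hb₁, hxb₁, hc⟩ := hs x hx b₂ hb₂ hxb₂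
  have hshift : x - b₂ + (b₂ - b₁) = x - b₁ := by abel
  calc mErosion P B₂ g (x - b₂)
      ≤ mErosion P B₁ g (x - b₂ + (b₂ - b₁)) := mErosion_le_mErosion_add_s15 hc h0 (hshift ▸ hxb₁)
    _ = mErosion P B₁ g (x - b₁) := by rw [hshift]
    _ ≤ mOpening P B₁ g x := le_mDilation hb₁ hxb₁

lemma mClosing_le_mClosing_of_shiftPos (hs : shiftPos P B₁ B₂) (h0 : 0 ∈ B₂) (hx : x ∈ P) :
    mClosing P B₁ g x ≤ mClosing P B₂ g x := by
  refine le_mErosion ⟨0, h0, by rwa [add_zero]⟩ fun b₂ hb₂ hxb₂ => ?_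
  obtain ⟨b₁, hb₁, hxb₁, hc⟩ := hs x hx b₂ hb₂ hxb₂
  have hshift : x + b₁ + (b₂ - b₁) = x + b₂ := by abel
  calc mClosing P B₁ g x
      ≤ mDilation P B₁ g (x + b₁) := mErosion_le hb₁ hxb₁
    _ ≤ mDilation P B₂ g (x + b₁ + (b₂ - b₁)) := mDilation_le_mDilation_add hc
    _ = mDilation P B₂ g (x + b₂) := by rw [hshift]

end Morphology

theorem order_preserving_strong_general (P : Set M) (B₁ B₂ : Finset M)
    (h1 : (0 : M) ∈ B₁) (h2 : (0 : M) ∈ B₂) :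
    (shiftNeg P B₁ B₂ →
      ∀ (g : M → ℝ≥0), ∀ x ∈ P, mOpening P B₂ g x ≤ mOpening P B₁ g x) ∧
    (shiftPos P B₁ B₂ →
      ∀ (g : M → ℝ≥0), ∀ x ∈ P, mClosing P B₁ g x ≤ mClosing P B₂ g x) :=
  ⟨fun hs _ _ hx => mOpening_le_mOpening_of_shiftNeg hs h1 hx,
    fun hs _ _ hx => mClosing_le_mClosing_of_shiftPos hs h2 hx⟩

/-- Order-preserving property, strong form. -/
theorem order_preserving_strong (P : Set M) (B₁ B₂ : Finset M)
    (h1 : (0 : M) ∈ B₁) (h2 : (0 : M) ∈ B₂) (hsub : B₁ ⊆ B₂) :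
    (shiftNeg P B₁ B₂ →
      ∀ (g : M → ℝ≥0), ∀ x ∈ P, mOpening P B₂ g x ≤ mOpening P B₁ g x) ∧
    (shiftPos P B₁ B₂ →
      ∀ (g : M → ℝ≥0), ∀ x ∈ P, mClosing P B₁ g x ≤ mClosing P B₂ g x) :=
  order_preserving_strong_general P B₁ B₂ h1 h2
end

section
/- On the whole group (P = M), the zero-set absorption property characterizes shift inclusion: B₁ ⊆_{S,M} B₂ holds if and only if O_{B₁}(g)⁻¹(0) ⊆ O_{B₂}(g)⁻¹(0) for every image g : M → ℝ≥0. -/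
open scoped NNReal

variable {M : Type*} [AddCommGroup M]

/-!
Both openings vanish at `x` exactly when every translate `x - b + B` of the structuring element
through `x` meets the zero set of `g`. A shift `b₂ - b₁` carrying `B₁` into `B₂` turns a zero of
`g` in `x - b₁ + B₁` into one in `x - b₂ + B₂`; conversely, for the indicator of `B₂` the
`B₂`-opening is nonzero at each `b₂ ∈ B₂`, and nonvanishing of the `B₁`-opening there produces
the shift.
-/

open Set

lemma mErosion_univ_eq_zero_iff {B : Finset M} (hB : B.Nonempty) (g : M → ℝ≥0) (x : M) :
    mErosion univ B g x = 0 ↔ ∃ b ∈ B, g (x + b) = 0 := by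
  have hS : {y | ∃ b ∈ B, x + b ∈ univ ∧ g (x + b) = y} = (fun b => g (x + b)) '' B := by
    ext; simp
  rw [mErosion, hS]
  constructor
  · intro h
    have hmem := (hB.to_set.image fun b => g (x + b)).csInf_mem (B.finite_toSet.image _)
    simpa [h] using hmem
  · rintro ⟨b, hb, hgb⟩
    exact le_antisymm (hgb ▸ csInf_le (OrderBot.bddBelow _) ⟨b, hb, rfl⟩) zero_le

lemma mDilation_univ_eq_zero_iff (B : Finset M) (f : M → ℝ≥0) (x : M) :
    mDilation univ B f x = 0 ↔ ∀ b ∈ B, f (x - b) = 0 := by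
  have hS : {y | ∃ b ∈ B, x - b ∈ univ ∧ f (x - b) = y} = (fun b => f (x - b)) '' B := by
    ext; simp
  rw [mDilation, hS, ← nonpos_iff_eq_zero, csSup_le_iff' (B.finite_toSet.image _).bddAbove]
  simp

lemma mOpening_univ_eq_zero_iff (B : Finset M) (g : M → ℝ≥0) (x : M) :
    mOpening univ B g x = 0 ↔ ∀ b ∈ B, ∃ b' ∈ B, g (x - b + b') = 0 := by
  rw [mOpening, mDilation_univ_eq_zero_iff]
  exact forall₂_congr fun b hb => mErosion_univ_eq_zero_iff ⟨b, hb⟩ g (x - b)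

lemma mOpening_univ_indicator_eq_zero_iff (B : Finset M) (C : Set M) (x : M) :
    mOpening univ B (C.indicator 1) x = 0 ↔ ∀ b ∈ B, ∃ b' ∈ B, x - b + b' ∉ C := by
  simp [mOpening_univ_eq_zero_iff, indicator_apply_eq_zero]

lemma mOpening_univ_eq_zero_mono_of_shift {B₁ B₂ : Finset M}
    (hS : ∀ b₂ ∈ B₂, ∃ b₁ ∈ B₁, ∀ b ∈ B₁, b + (b₂ - b₁) ∈ B₂) {g : M → ℝ≥0} {x : M}
    (h : mOpening univ B₁ g x = 0) : mOpening univ B₂ g x = 0 := by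
  rw [mOpening_univ_eq_zero_iff] at h ⊢
  intro b₂ hb₂
  obtain ⟨b₁, hb₁, hshift⟩ := hS b₂ hb₂
  obtain ⟨b, hb, hgb⟩ := h b₁ hb₁
  refine ⟨b + (b₂ - b₁), hshift b hb, ?_⟩
  rwa [show x - b₂ + (b + (b₂ - b₁)) = x - b₁ + b by abel]

lemma shift_of_mOpening_univ_eq_zero_mono {B₁ B₂ : Finset M}
    (hmono : ∀ (g : M → ℝ≥0) (x : M), mOpening univ B₁ g x = 0 → mOpening univ B₂ g x = 0) :
    ∀ b₂ ∈ B₂, ∃ b₁ ∈ B₁, ∀ b ∈ B₁, b + (b₂ - b₁) ∈ B₂ := by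
  intro b₂ hb₂
  have hB₂ : mOpening univ B₂ ((B₂ : Set M).indicator 1) b₂ ≠ 0 := by
    rw [Ne, mOpening_univ_indicator_eq_zero_iff]
    push Not
    exact ⟨b₂, hb₂, fun b' hb' => by simpa using hb'⟩
  have hB₁ := mt (hmono _ b₂) hB₂
  rw [mOpening_univ_indicator_eq_zero_iff] at hB₁
  push Not at hB₁
  obtain ⟨b₁, hb₁, hmem⟩ := hB₁
  exact ⟨b₁, hb₁, fun b hb => add_comm b (b₂ - b₁) ▸ hmem b hb⟩

theorem shiftIncl_iff_opening_zero_mono_general (B₁ B₂ : Finset M) :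
    (∀ b₂ ∈ B₂, ∃ b₁ ∈ B₁, ∀ b ∈ B₁, b + (b₂ - b₁) ∈ B₂) ↔
      ∀ (g : M → ℝ≥0) (x : M),
        mOpening (Set.univ : Set M) B₁ g x = 0 → mOpening (Set.univ : Set M) B₂ g x = 0 :=
  ⟨fun hS _ _ => mOpening_univ_eq_zero_mono_of_shift hS, shift_of_mOpening_univ_eq_zero_mono⟩

/-- On the whole group, shift inclusion is equivalent to nesting of opening zero sets. -/
theorem shiftIncl_iff_opening_zero_mono (B₁ B₂ : Finset M)
    (h1 : (0 : M) ∈ B₁) (h2 : (0 : M) ∈ B₂) (hsub : B₁ ⊆ B₂) :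
    (∀ b₂ ∈ B₂, ∃ b₁ ∈ B₁, ∀ b ∈ B₁, b + (b₂ - b₁) ∈ B₂) ↔
      ∀ (g : M → ℝ≥0) (x : M),
        mOpening (Set.univ : Set M) B₁ g x = 0 → mOpening (Set.univ : Set M) B₂ g x = 0 :=
  shiftIncl_iff_opening_zero_mono_general B₁ B₂
end
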